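/- Let V be a finite-dimensional complex inner product space, ∂ : V → V a linear map with ∂² = 0, and ∂† its adjoint. Then ker(∂) = ker(Δ) ⊕ range(∂) as an internal direct sum, where Δ := ∂∂† + ∂†∂. Consequently ker(Δ) is isomorphic, as a vector space, to the cohomology ker(∂)/range(∂). -/
import Mathlib

open LinearMap Submodule

local notation "⟪" x ", " y "⟫" => @inner ℂ _ _ x y

/-- `ker ∂ = ker Δ ⊕ range ∂` as an internal direct sum, and consequently
`ker Δ` is linearly isomorphic to the cohomology `ker ∂ / range ∂`. -/
theorem ker_del_direct_sum_and_cohomology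
    {V : Type*} [NormedAddCommGroup V] [InnerProductSpace ℂ V] [FiniteDimensional ℂ V]
    (del : V →ₗ[ℂ] V) (h : del ∘ₗ del = 0) :
    (LinearMap.ker (del ∘ₗ LinearMap.adjoint del + LinearMap.adjoint del ∘ₗ del) ⊔
        LinearMap.range del = LinearMap.ker del) ∧
    (LinearMap.ker (del ∘ₗ LinearMap.adjoint del + LinearMap.adjoint del ∘ₗ del) ⊓
        LinearMap.range del = ⊥) ∧
    Nonempty
      ((LinearMap.ker (del ∘ₗ LinearMap.adjoint del + LinearMap.adjoint del ∘ₗ del)) ≃ₗ[ℂ]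
        (↥(LinearMap.ker del) ⧸
          (LinearMap.range del).comap (LinearMap.ker del).subtype)) := by
  set A := LinearMap.adjoint del with hA
  -- ker Δ = ker del ⊓ ker A
  have hkerΔ : LinearMap.ker (del ∘ₗ A + A ∘ₗ del) = LinearMap.ker del ⊓ LinearMap.ker A := by
    ext x
    simp only [LinearMap.mem_ker, Submodule.mem_inf, LinearMap.add_apply, LinearMap.comp_apply]
    constructor
    · intro hx
      have h0 : ⟪del (A x) + A (del x), x⟫ = 0 := by rw [hx, inner_zero_left]
      have h1 : ⟪del (A x), x⟫ = (‖A x‖ : ℂ) ^ 2 := by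
        rw [hA, ← LinearMap.adjoint_adjoint del]
        rw [LinearMap.adjoint_inner_left]
        rw [LinearMap.adjoint_adjoint]
        exact inner_self_eq_norm_sq_to_K _
      have h2 : ⟪A (del x), x⟫ = (‖del x‖ : ℂ) ^ 2 := by
        rw [hA, LinearMap.adjoint_inner_left]
        exact inner_self_eq_norm_sq_to_K _
      rw [inner_add_left, h1, h2] at h0
      have : (‖A x‖ ^ 2 + ‖del x‖ ^ 2 : ℝ) = 0 := by exact_mod_cast h0
      have hax : ‖A x‖ = 0 := by nlinarith [sq_nonneg ‖A x‖, sq_nonneg ‖del x‖]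
      have hdx : ‖del x‖ = 0 := by nlinarith [sq_nonneg ‖A x‖, sq_nonneg ‖del x‖]
      constructor <;> [skip; skip]
      · exact norm_eq_zero.mp hdx
      · exact norm_eq_zero.mp hax
    · rintro ⟨h1, h2⟩
      rw [h1, h2, map_zero, map_zero, add_zero]
  -- ker A = (range del)ᗮ
  have hkerA : LinearMap.ker A = (LinearMap.range del)ᗮ := by
    ext x
    rw [LinearMap.mem_ker, Submodule.mem_orthogonal]
    constructor
    · rintro hx u ⟨y, rfl⟩
      rw [← LinearMap.adjoint_inner_right del]
      rw [← hA, hx, inner_zero_right]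
    · intro hx
      rw [← inner_self_eq_zero (𝕜 := ℂ)]
      rw [hA, LinearMap.adjoint_inner_right]
      exact hx _ ⟨A x, rfl⟩
  have hrle : LinearMap.range del ≤ LinearMap.ker del := by
    rintro x ⟨y, rfl⟩
    exact LinearMap.congr_fun h y
  -- sup
  have hsup : LinearMap.ker (del ∘ₗ A + A ∘ₗ del) ⊔ LinearMap.range del = LinearMap.ker del := by
    apply le_antisymm
    · rw [hkerΔ]
      exact sup_le (inf_le_left) hrle
    · intro x hx
      obtain ⟨y, hy, z, hz, rfl⟩ := (LinearMap.range del).exists_add_mem_mem_orthogonal x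
      have hzk : z ∈ LinearMap.ker (del ∘ₗ A + A ∘ₗ del) := by
        rw [hkerΔ, Submodule.mem_inf]
        refine ⟨?_, hkerA ▸ hz⟩
        have : del y = 0 := hrle hy
        have : del (y + z) = 0 := hx
        rw [map_add] at this
        simpa [LinearMap.mem_ker.mp (hrle hy)] using this
      exact add_mem (Submodule.mem_sup_right hy) (Submodule.mem_sup_left hzk)
  -- inf
  have hinf : LinearMap.ker (del ∘ₗ A + A ∘ₗ del) ⊓ LinearMap.range del = ⊥ := by
    rw [hkerΔ, hkerA, eq_bot_iff]
    intro x hx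
    simp only [Submodule.mem_inf] at hx
    have h0 : ⟪x, x⟫ = 0 := (Submodule.mem_orthogonal _ x).mp hx.1.2 x hx.2
    simpa [Submodule.mem_bot] using inner_self_eq_zero.mp h0
  refine ⟨hsup, hinf, ?_⟩
  -- isomorphism
  set N := LinearMap.ker del
  set K := LinearMap.ker (del ∘ₗ A + A ∘ₗ del)
  have hKle : K ≤ N := by rw [hkerΔ]; exact inf_le_left
  have hcompl : IsCompl (K.comap N.subtype) ((LinearMap.range del).comap N.subtype) := by
    constructor
    · rw [disjoint_iff, eq_bot_iff]
      rintro ⟨x, hxN⟩ hx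
      simp only [Submodule.mem_inf, Submodule.mem_comap, Submodule.subtype_apply] at hx
      have : x ∈ K ⊓ LinearMap.range del := Submodule.mem_inf.mpr hx
      rw [hinf, Submodule.mem_bot] at this
      simpa [Submodule.mem_bot, Subtype.ext_iff] using this
    · rw [codisjoint_iff, eq_top_iff]
      rintro ⟨x, hxN⟩ -
      have : x ∈ K ⊔ LinearMap.range del := hsup ▸ hxN
      obtain ⟨k, hk, r, hr, hkr⟩ := Submodule.mem_sup.mp this
      have hkN : k ∈ N := hKle hk
      have hrN : r ∈ N := hrle hr
      have : (⟨x, hxN⟩ : N) = ⟨k, hkN⟩ + ⟨r, hrN⟩ := by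
        ext; simp [hkr.symm]
      rw [this]
      exact Submodule.add_mem_sup (by simpa using hk) (by simpa using hr)
  exact ⟨(Submodule.comapSubtypeEquivOfLe hKle).symm.trans
    (Submodule.quotientEquivOfIsCompl _ _ hcompl.symm).symm⟩
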